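/- For any A ∈ ℤ^{d×n} and b ∈ ℂⁿ, the Lissajous variety ℒ_{A,b} ⊆ ℂⁿ equals the image of the variety 𝒴_{A,b} under the coordinate projection π_{A,b} : 𝒴_{A,b} → ℂⁿ, (x,y) ↦ x. -/

import Mathlib

noncomputable section


/-- A subset of `ℂⁿ` is Zariski closed if it is the common zero locus
of a set of polynomials. -/
def ZClosed {n : ℕ} (S : Set (Fin n → ℂ)) : Prop :=
  ∃ I : Set (MvPolynomial (Fin n) ℂ),
    S = {x | ∀ p ∈ I, MvPolynomial.eval x p = 0}

/-- Irreducibility with respect to the Zariski topology on `ℂⁿ`. -/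
def ZIrred {n : ℕ} (S : Set (Fin n → ℂ)) : Prop :=
  S.Nonempty ∧ ∀ F G : Set (Fin n → ℂ), ZClosed F → ZClosed G →
    S ⊆ F ∪ G → (S ⊆ F ∨ S ⊆ G)

/-- Dimension of a subset of `ℂⁿ`: Krull dimension of the poset of irreducible
Zariski closed subsets contained in it. -/
def ZDim {n : ℕ} (S : Set (Fin n → ℂ)) : WithBot ℕ∞ :=
  Order.krullDim {T : Set (Fin n → ℂ) // ZClosed T ∧ ZIrred T ∧ T ⊆ S}

/-- Zariski closure in `ℂⁿ`. -/
def ZClosure {n : ℕ} (S : Set (Fin n → ℂ)) : Set (Fin n → ℂ) :=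
  ⋂₀ {F | ZClosed F ∧ S ⊆ F}

/-- A property `P` of points of `ℂ^σ` holds generically if it holds on the
nonvanishing locus of some nonzero polynomial. -/
def GenericProp {σ : Type} (P : (σ → ℂ) → Prop) : Prop :=
  ∃ p : MvPolynomial σ ℂ, p ≠ 0 ∧ ∀ x : σ → ℂ, MvPolynomial.eval x p ≠ 0 → P x

/-- `S ⊆ ℂⁿ` (of dimension `d`) has degree `k`: a generic affine-linear subspace of
codimension `d` meets `S` in exactly `k` points. -/
def HasVarietyDegree {n : ℕ} (S : Set (Fin n → ℂ)) (d k : ℕ) : Prop :=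
  GenericProp (σ := Fin d × Option (Fin n)) fun c =>
    ({x ∈ S | ∀ j : Fin d, c (j, none) + ∑ i : Fin n, c (j, some i) * x i = 0}).ncard = k

/-- The ℂ-linear span of the rows of an integer matrix `A`. -/
def rowSpanC {d n : ℕ} (A : Matrix (Fin d) (Fin n) ℤ) : Submodule ℂ (Fin n → ℂ) :=
  Submodule.span ℂ (Set.range fun i : Fin d => fun j : Fin n => (A i j : ℂ))

/-- The Lissajous variety `ℒ_{A,b} = cos(Row(A) - bπ/2)`. -/
def Lissajous {d n : ℕ} (A : Matrix (Fin d) (Fin n) ℤ) (b : Fin n → ℂ) :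
    Set (Fin n → ℂ) :=
  (fun x j => Complex.cos (x j)) ''
    {y | ∃ x ∈ rowSpanC A, y = x - ((Real.pi : ℂ) / 2) • b}

/-- `β_ℓ = exp(-i b_ℓ π / 2)`. -/
def betaOf {n : ℕ} (b : Fin n → ℂ) : Fin n → ℂ :=
  fun ℓ => Complex.exp (-(Complex.I * b ℓ * ((Real.pi : ℂ) / 2)))

/-- The trigonometric parametrization `φ_{A,b}` of the Lissajous variety. -/
def phiMap {d n : ℕ} (A : Matrix (Fin d) (Fin n) ℤ) (b : Fin n → ℂ) (t : Fin d → ℂ) :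
    Fin n → ℂ :=
  fun ℓ => Complex.cos ((∑ i, (A i ℓ : ℂ) * t i) - b ℓ * ((Real.pi : ℂ) / 2))

/-- The rational parametrization `ψ_{A,b}` of the Lissajous variety. -/
def psiMap {d n : ℕ} (A : Matrix (Fin d) (Fin n) ℤ) (b : Fin n → ℂ) (v : Fin d → ℂ) :
    Fin n → ℂ :=
  fun ℓ => (betaOf b ℓ * ∏ k, v k ^ (A k ℓ) + (betaOf b ℓ)⁻¹ * ∏ k, v k ^ (-(A k ℓ))) / 2

/-- The image of the algebraic torus under the monomial map of `A`. -/
def torusImage {d n : ℕ} (A : Matrix (Fin d) (Fin n) ℤ) : Set (Fin n → ℂ) :=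
  (fun v : Fin d → ℂ => fun ℓ : Fin n => ∏ k, v k ^ (A k ℓ)) '' {v | ∀ k, v k ≠ 0}

/-- The affine toric variety `Y_A`. -/
def YA {d n : ℕ} (A : Matrix (Fin d) (Fin n) ℤ) : Set (Fin n → ℂ) :=
  ZClosure (torusImage A)

/-- The scaled toric variety `Y_{A,β}`. -/
def YAbeta {d n : ℕ} (A : Matrix (Fin d) (Fin n) ℤ) (β : Fin n → ℂ) : Set (Fin n → ℂ) :=
  (fun y ℓ => β ℓ * y ℓ) '' YA A

/-- The incidence variety `𝒴_{A,b} ⊆ ℂⁿ × (ℂ*)ⁿ`. -/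
def YcalAb {d n : ℕ} (A : Matrix (Fin d) (Fin n) ℤ) (b : Fin n → ℂ) :
    Set ((Fin n → ℂ) × (Fin n → ℂ)) :=
  {p | (∀ j, p.2 j ≠ 0) ∧ p.2 ∈ YAbeta A (betaOf b) ∧
    ∀ j, p.1 j = (p.2 j + (p.2 j)⁻¹) / 2}

/-- The coordinate projection `Y → S` has degree `e`: the fiber over a generic point
of `S` (i.e. outside a proper Zariski closed subset) has exactly `e` points. -/
def HasFiberDegree {n : ℕ} (Y : Set ((Fin n → ℂ) × (Fin n → ℂ)))
    (S : Set (Fin n → ℂ)) (e : ℕ) : Prop :=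
  ∃ U : Set (Fin n → ℂ), ZClosed U ∧ ¬ S ⊆ U ∧
    ∀ x ∈ S \ U, ({p ∈ Y | p.1 = x}).ncard = e

/-- The index `[ℤ^d : ℤA]` of the lattice generated by the columns of `A`. -/
def latticeIndex {d n : ℕ} (A : Matrix (Fin d) (Fin n) ℤ) : ℕ :=
  (Submodule.span ℤ (Set.range fun j : Fin n => fun i : Fin d => A i j)).toAddSubgroup.index

/-! Since `cos z = (e^{iz} + e^{-iz}) / 2`, the Lissajous variety is the image of the scaled
torus orbit `{β · v^A : v ∈ (ℂ*)^d}` under `y ↦ (y + y⁻¹) / 2`. So the theorem amounts to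
`Y_A ∩ (ℂ*)ⁿ` being exactly that orbit. A point `w` of `Y_A` satisfies the binomial equations
`w^c = 1` for `c ∈ ker A`, since these vanish on the orbit; on the torus this makes
`c ↦ w^c` a character of `ℤⁿ` trivial on `ker A`, which factors through `A`, and as `ℂ*` is
divisible (an injective `ℤ`-module) it extends from `A ℤⁿ` to `ℤ^d`, giving `w = v^A`. -/

open Complex MvPolynomial Matrix

theorem Module.Baer.exists_comp_eq_of_ker_le {R Q M P : Type*} [Ring R] [AddCommGroup Q]
    [Module R Q] [AddCommGroup M] [Module R M] [AddCommGroup P] [Module R P]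
    (hQ : Module.Baer R Q) (f : M →ₗ[R] P) (g : M →ₗ[R] Q)
    (hfg : LinearMap.ker f ≤ LinearMap.ker g) : ∃ ψ : P →ₗ[R] Q, ψ ∘ₗ f = g := by
  obtain ⟨ψ, hψ⟩ := hQ.extension_property (LinearMap.range f).subtype Subtype.val_injective
    ((LinearMap.ker f).liftQ g hfg ∘ₗ f.quotKerEquivRange.symm.toLinearMap)
  refine ⟨ψ, LinearMap.ext fun x => ?_⟩
  simpa [LinearMap.quotKerEquivRange_symm_apply_image] using
    LinearMap.congr_fun hψ ⟨f x, LinearMap.mem_range_self f x⟩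

section Character

variable {G ι κ : Type*} [CommGroup G] [Fintype ι] [Fintype κ]

def character (w : ι → G) : (ι → ℤ) →ₗ[ℤ] Additive G :=
  Fintype.linearCombination ℤ fun j => Additive.ofMul (w j)

lemma character_apply (w : ι → G) (c : ι → ℤ) :
    character w c = Additive.ofMul (∏ j, w j ^ c j) := by
  simp [character, Fintype.linearCombination_apply]

lemma character_single [DecidableEq ι] (w : ι → G) (j : ι) :
    character w (Pi.single j 1) = Additive.ofMul (w j) := by
  simp [character]

def monomialMap (A : Matrix κ ι ℤ) (v : κ → G) : ι → G :=
  fun ℓ => ∏ k, v k ^ A k ℓ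

lemma character_comp_mulVecLin [DecidableEq ι] (A : Matrix κ ι ℤ) (v : κ → G) :
    character v ∘ₗ A.mulVecLin = character (monomialMap A v) := by
  ext ℓ
  simp [character_apply, monomialMap, Matrix.mulVec_single]

lemma prod_monomialMap_zpow_eq_one (A : Matrix κ ι ℤ) (v : κ → G) {c : ι → ℤ}
    (hc : A *ᵥ c = 0) : ∏ j, monomialMap A v j ^ c j = 1 := by
  classical
  have := LinearMap.congr_fun (character_comp_mulVecLin A v) c
  rwa [LinearMap.comp_apply, mulVecLin_apply, hc, map_zero, character_apply, eq_comm,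
    ofMul_eq_zero] at this

/-- A character of `ℤ^ι` trivial on `ker A` factors through `A`, and extends from the lattice
`A ℤ^ι` to `ℤ^κ` because `G` is divisible. -/
lemma exists_monomialMap_eq_iff (hG : Module.Baer ℤ (Additive G)) (A : Matrix κ ι ℤ)
    (w : ι → G) :
    (∃ v, monomialMap A v = w) ↔ ∀ c, A *ᵥ c = 0 → ∏ j, w j ^ c j = 1 := by
  classical
  refine ⟨by rintro ⟨v, rfl⟩ c hc; exact prod_monomialMap_zpow_eq_one A v hc, fun hw => ?_⟩
  obtain ⟨ψ, hψ⟩ := hG.exists_comp_eq_of_ker_le A.mulVecLin (character w) fun c hc => by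
    rw [LinearMap.mem_ker, character_apply, hw c hc, ofMul_one]
  set v : κ → G := fun k => (ψ (Pi.single k 1)).toMul
  have hψv : ψ = character v := by
    ext k
    simp [v, character_single]
  refine ⟨v, funext fun ℓ => ?_⟩
  have := LinearMap.congr_fun hψ (Pi.single ℓ 1)
  rwa [hψv, character_comp_mulVecLin, character_single, character_single,
    Additive.ofMul.apply_eq_iff_eq] at this

end Character

lemma Complex.baer_additive_units : Module.Baer ℤ (Additive ℂˣ) := by
  let : DivisibleBy (Additive ℂˣ) ℤ := divisibleByOfSMulRightSurj _ _ fun {n} hn x =>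
    ⟨Additive.ofMul (Units.mk0 (exp (log x.toMul / n)) (exp_ne_zero _)), by
      apply Additive.toMul.injective
      ext
      simp [← exp_int_mul, mul_div_cancel₀, hn, exp_log]⟩
  exact Module.Baer.of_divisible _

def binomial {σ K : Type*} [Fintype σ] [CommRing K] (c : σ → ℤ) : MvPolynomial σ K :=
  ∏ j, X j ^ (c j).toNat - ∏ j, X j ^ (-c j).toNat

lemma eval_binomial_eq_zero_iff {σ K : Type*} [Fintype σ] [Field K] {x : σ → K}
    (hx : ∀ j, x j ≠ 0) (c : σ → ℤ) : eval x (binomial c) = 0 ↔ ∏ j, x j ^ c j = 1 := by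
  have hquot : ∏ j, x j ^ c j = (∏ j, x j ^ (c j).toNat) / ∏ j, x j ^ (-c j).toNat := by
    rw [← Finset.prod_div_distrib]
    refine Finset.prod_congr rfl fun j _ => ?_
    rw [← zpow_natCast, ← zpow_natCast, ← zpow_sub₀ (hx j), Int.toNat_sub_toNat_neg]
  rw [hquot, div_eq_one_iff_eq (Finset.prod_ne_zero_iff.2 fun j _ => pow_ne_zero _ (hx j))]
  simp [binomial, sub_eq_zero]

lemma eval_eq_zero_of_mem_ZClosure {n : ℕ} {S : Set (Fin n → ℂ)} {p : MvPolynomial (Fin n) ℂ}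
    (hp : ∀ x ∈ S, eval x p = 0) {x : Fin n → ℂ} (hx : x ∈ ZClosure S) : eval x p = 0 :=
  Set.mem_sInter.1 hx {x | eval x p = 0} ⟨⟨{p}, by simp⟩, hp⟩

lemma torusImage_eq_range {d n : ℕ} (A : Matrix (Fin d) (Fin n) ℤ) :
    torusImage A = Set.range fun v : Fin d → ℂˣ => fun ℓ => ((monomialMap A v ℓ : ℂˣ) : ℂ) := by
  ext w
  constructor
  · rintro ⟨v, hv, rfl⟩
    exact ⟨fun k => Units.mk0 (v k) (hv k), by ext; simp [monomialMap]⟩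
  · rintro ⟨v, rfl⟩
    exact ⟨fun k => v k, fun k => (v k).ne_zero, by ext; simp [monomialMap]⟩

lemma mem_torusImage_of_mem_YA {d n : ℕ} {A : Matrix (Fin d) (Fin n) ℤ} {w : Fin n → ℂ}
    (hw : w ∈ YA A) (hw0 : ∀ j, w j ≠ 0) : w ∈ torusImage A := by
  set u : Fin n → ℂˣ := fun j => Units.mk0 (w j) (hw0 j)
  obtain ⟨v, hv⟩ := (exists_monomialMap_eq_iff baer_additive_units A u).2 fun c hc => by
    ext
    push_cast
    change ∏ j, w j ^ c j = 1
    rw [← eval_binomial_eq_zero_iff hw0]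
    refine eval_eq_zero_of_mem_ZClosure ?_ hw
    rw [torusImage_eq_range]
    rintro _ ⟨v, rfl⟩
    rw [eval_binomial_eq_zero_iff fun _ => Units.ne_zero _]
    simpa using congr_arg Units.val (prod_monomialMap_zpow_eq_one A v hc)
  rw [torusImage_eq_range]
  exact ⟨v, funext fun ℓ => by simp [hv, u]⟩

section Lissajous

variable {d n : ℕ} (A : Matrix (Fin d) (Fin n) ℤ) (b : Fin n → ℂ)

lemma Lissajous_eq_range_phiMap : Lissajous A b = Set.range (phiMap A b) := by
  ext x
  simp only [Lissajous, rowSpanC, Submodule.mem_span_range_iff_exists_fun, Set.mem_image,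
    Set.mem_ofPred_eq, Set.mem_range]
  constructor
  · rintro ⟨_, ⟨_, ⟨t, rfl⟩, rfl⟩, rfl⟩
    exact ⟨t, funext fun ℓ => by simp [phiMap, mul_comm]⟩
  · rintro ⟨t, rfl⟩
    exact ⟨_, ⟨_, ⟨t, rfl⟩, rfl⟩, funext fun ℓ => by simp [phiMap, mul_comm]⟩

lemma psiMap_apply_eq (v : Fin d → ℂ) (ℓ : Fin n) :
    psiMap A b v ℓ =
      (betaOf b ℓ * ∏ k, v k ^ A k ℓ + (betaOf b ℓ * ∏ k, v k ^ A k ℓ)⁻¹) / 2 := by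
  simp only [psiMap, _root_.zpow_neg, Finset.prod_inv_distrib, mul_inv]

lemma exp_phiMap_arg_mul_I (t : Fin d → ℂ) (ℓ : Fin n) :
    exp (((∑ i, (A i ℓ : ℂ) * t i) - b ℓ * (Real.pi / 2)) * I) =
      betaOf b ℓ * ∏ k, exp (I * t k) ^ A k ℓ := by
  have harg : ((∑ i, (A i ℓ : ℂ) * t i) - b ℓ * (Real.pi / 2)) * I =
      -(I * b ℓ * (Real.pi / 2)) + ∑ k, (A k ℓ : ℂ) * (I * t k) := by
    simp only [sub_mul, Finset.sum_mul, neg_add_eq_sub]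
    congr 1
    · exact Finset.sum_congr rfl fun _ _ => by ring
    · ring
  rw [harg, exp_add, exp_sum]
  simp [betaOf, exp_int_mul]

lemma phiMap_eq_psiMap_exp (t : Fin d → ℂ) :
    phiMap A b t = psiMap A b fun k => exp (I * t k) := by
  funext ℓ
  simp only [phiMap, Complex.cos, psiMap_apply_eq, ← exp_phiMap_arg_mul_I, neg_mul, exp_neg]

lemma range_phiMap : Set.range (phiMap A b) = psiMap A b '' {v | ∀ k, v k ≠ 0} := by
  ext x
  constructor
  · rintro ⟨t, rfl⟩
    exact ⟨_, fun k => exp_ne_zero _, (phiMap_eq_psiMap_exp A b t).symm⟩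
  · rintro ⟨v, hv, rfl⟩
    refine ⟨fun k => -I * log (v k), ?_⟩
    rw [phiMap_eq_psiMap_exp]
    congr
    funext k
    rw [← mul_assoc, mul_neg, I_mul_I, neg_neg, one_mul, exp_log (hv k)]

lemma fst_image_YcalAb : Prod.fst '' YcalAb A b = psiMap A b '' {v | ∀ k, v k ≠ 0} := by
  ext z
  constructor
  · rintro ⟨⟨x, y⟩, ⟨hy0, ⟨w, hw, rfl⟩, hx⟩, rfl⟩
    have hw0 : ∀ j, w j ≠ 0 := fun j => right_ne_zero_of_mul (hy0 j)
    obtain ⟨v, hv, rfl⟩ := mem_torusImage_of_mem_YA hw hw0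
    exact ⟨v, hv, funext fun ℓ => by rw [psiMap_apply_eq, hx]⟩
  · rintro ⟨v, hv, rfl⟩
    refine ⟨⟨_, fun ℓ => betaOf b ℓ * ∏ k, v k ^ A k ℓ⟩, ⟨fun ℓ => ?_, ⟨_, ?_, rfl⟩,
      fun ℓ => psiMap_apply_eq A b v ℓ⟩, rfl⟩
    · exact mul_ne_zero (exp_ne_zero _)
        (Finset.prod_ne_zero_iff.2 fun k _ => zpow_ne_zero _ (hv k))
    · exact Set.mem_sInter.2 fun F hF => hF.2 ⟨v, hv, rfl⟩

end Lissajous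

/-- Theorem 2.2: the Lissajous variety `ℒ_{A,b}` is the image of `𝒴_{A,b}` under the
coordinate projection `(x, y) ↦ x`. -/
theorem stmt3 {d n : ℕ} (A : Matrix (Fin d) (Fin n) ℤ) (b : Fin n → ℂ) :
    Lissajous A b = Prod.fst '' YcalAb A b := by
  rw [Lissajous_eq_range_phiMap, range_phiMap, fst_image_YcalAb]
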